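/- arXiv:math/0204170 — 8 statements merged into one kernel-verified Lean document; each statement's English description precedes it below -/
import Mathlib

section
/- Let k be a positive integer with gcd(k, 6) = 1. If x is a rational number whose denominator in lowest terms is k, then the denominator in lowest terms of T(x) is also k; that is, T maps D_k into D_k. -/
/-- The `3x+1` function on rationals: `T x = x/2` if the numerator of `x` is even,
and `T x = (3x+1)/2` if the numerator of `x` is odd. -/
noncomputable def T (x : ℚ) : ℚ := if Even x.num then x / 2 else (3 * x + 1) / 2

/-!
Write `x = n / k` in lowest terms. If `n` is even, `T x = (n / 2) / k` and `n / 2` is still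
coprime to `k`. If `n` is odd, `T x = ((3n + k) / 2) / k`: here `3n + k` is even because `k` is
odd, and it is coprime to `k` because `n` and `3` are. So no cancellation occurs in either case.
-/

namespace Rat

theorem den_intCast_div_natCast_of_coprime {n : ℤ} {d : ℕ} (hd : 0 < d)
    (h : Nat.Coprime n.natAbs d) : ((n : ℚ) / d).den = d := by
  have := den_div_eq_of_coprime (a := n) (b := d) (by exact_mod_cast hd) (by simpa using h)
  exact_mod_cast this

theorem den_intCast_mul_of_coprime {a : ℤ} {q : ℚ} (h : Nat.Coprime a.natAbs q.den) :
    (a * q).den = q.den := by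
  have hq : (a * q : ℚ) = ((a * q.num : ℤ) : ℚ) / q.den := by
    conv_lhs => rw [← num_div_den q]
    push_cast
    ring
  rw [hq]
  refine den_intCast_div_natCast_of_coprime q.den_pos ?_
  rw [Int.natAbs_mul]
  exact h.mul_left q.reduced

theorem den_div_intCast_of_dvd_num {a : ℤ} {q : ℚ} (h : a ∣ q.num) : (q / a).den = q.den := by
  obtain ⟨m, hm⟩ := h
  rcases eq_or_ne a 0 with rfl | ha
  · simp_all
  have hq : q / a = (m : ℚ) / q.den := by
    conv_lhs => rw [← num_div_den q]
    rw [hm]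
    push_cast
    field_simp
  rw [hq]
  refine den_intCast_div_natCast_of_coprime q.den_pos (q.reduced.coprime_dvd_left ?_)
  exact Int.natAbs_dvd_natAbs.mpr ⟨a, by rw [hm, mul_comm]⟩

variable {a b : ℤ} {q : ℚ}

theorem den_intCast_mul_add_intCast (h : Nat.Coprime a.natAbs q.den) :
    (a * q + b).den = q.den := by
  rw [add_intCast_den, den_intCast_mul_of_coprime h]

theorem num_intCast_mul_add_intCast (h : Nat.Coprime a.natAbs q.den) :
    (a * q + b).num = a * q.num + b * q.den := by
  have key := mul_den_eq_num (a * q + b)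
  rw [den_intCast_mul_add_intCast h] at key
  have : ((a * q + b).num : ℚ) = a * q.num + b * q.den := by
    rw [← key, ← mul_den_eq_num q]
    ring
  exact_mod_cast this

end Rat

theorem den_T_of_coprime_six {x : ℚ} (h : Nat.Coprime x.den 6) : (T x).den = x.den := by
  unfold T
  split_ifs with hnum
  · exact_mod_cast Rat.den_div_intCast_of_dvd_num (a := 2) (even_iff_two_dvd.mp hnum)
  · have h3 : Nat.Coprime (3 : ℤ).natAbs x.den := (h.coprime_dvd_right (by norm_num)).symm
    have hden : Odd (x.den : ℤ) := by
      exact_mod_cast Nat.coprime_two_right.mp (h.coprime_dvd_right (by norm_num))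
    have hden_eq := Rat.den_intCast_mul_add_intCast (b := 1) h3
    have hnum_eq := Rat.num_intCast_mul_add_intCast (b := 1) h3
    push_cast at hden_eq hnum_eq
    have hnum_even : Even (3 * x + 1).num := by
      rw [hnum_eq, one_mul]
      exact (Odd.mul (by decide) (Int.not_even_iff_odd.mp hnum)).add_odd hden
    have := Rat.den_div_intCast_of_dvd_num (even_iff_two_dvd.mp hnum_even)
    push_cast at this
    rw [this, hden_eq]

theorem stmt_1_general (k : ℕ) (h6 : Nat.gcd k 6 = 1)
    (x : ℚ) (hx : x.den = k) : (T x).den = k := by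
  subst hx
  exact den_T_of_coprime_six h6

/-- If `gcd(k,6) = 1` then `T` maps `D_k` (rationals with denominator `k` in lowest
terms) into `D_k`. -/
theorem stmt_1 (k : ℕ) (hk : 0 < k) (h6 : Nat.gcd k 6 = 1)
    (x : ℚ) (hx : x.den = k) : (T x).den = k :=
  stmt_1_general k h6 x hx
end

section
/- For every n ≥ 1 and every 0–1 vector v = (v_0,…,v_{n−1}) ∈ {0,1}^n, one has 2^n ≠ 3^{ω(v)}, the rational number x(v) = ρ(v)/(2^n − 3^{ω(v)}) has odd denominator in lowest terms, T^n(x(v)) = x(v), and for each j with 0 ≤ j < n the iterate T^j(x(v)) is odd if v_j = 1 and even if v_j = 0 (existence half of the Böhm–Sontacchi–Lagarias theorem). -/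
/-- `ω(v) = v_0 + ⋯ + v_{n-1}`. -/
def omegaF {n : ℕ} (v : Fin n → ℕ) : ℕ := ∑ j, v j

/-- `ρ(v) = ∑_{j=0}^{n-1} v_j ⬝ 3^{v_{j+1} + ⋯ + v_{n-1}} ⬝ 2^j`. -/
def rhoF {n : ℕ} (v : Fin n → ℕ) : ℕ :=
  ∑ j : Fin n, v j * 3 ^ (∑ i : Fin n, if (j : ℕ) < (i : ℕ) then v i else 0) * 2 ^ (j : ℕ)

/-- `x(v) = ρ(v) / (2^n - 3^{ω(v)})`. -/
noncomputable def xF {n : ℕ} (v : Fin n → ℕ) : ℚ :=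
  (rhoF v : ℚ) / ((2 : ℚ) ^ n - (3 : ℚ) ^ omegaF v)

/-!
Let `v'` be the left rotation `(v₁, …, v_{n-1}, v₀)` of `v`. Splitting `ρ` at its first and at
its last coordinate gives `3^{v₀} ρ(v) + v₀ 2ⁿ = v₀ 3^{ω(v)} + 2 ρ(v')`, and `ω(v') = ω(v)`,
so `2 x(v') = 3^{v₀} x(v) + v₀`. The denominator `2ⁿ - 3^{ω(v)}` is odd, hence `x(v)` has odd
denominator and the parity of `ρ(v)`, which is that of `v₀`. Therefore `T (x(v)) = x(v')`, and
`T^j (x(v))` is `x` of the `j`-fold rotation of `v`: it has parity `v_j`, and it is `x(v)` again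
for `j = n`.
-/

theorem Rat.odd_den_and_even_num_iff_of_odd {a d : ℤ} (hd : Odd d) :
    Odd ((a / d : ℚ)).den ∧ (Even ((a / d : ℚ)).num ↔ Even a) := by
  set q : ℚ := a / d
  obtain ⟨c, ha, hd'⟩ := Rat.num_den_mk (by rintro rfl; simp at hd) (Rat.divInt_eq_div a d).symm
  rw [hd', Int.odd_mul] at hd
  refine ⟨Int.odd_coe_nat _ |>.mp hd.2, ?_⟩
  rw [ha, Int.even_mul, ← Int.not_odd_iff_even (n := c)]
  tauto

namespace Collatz

theorem two_pow_succ_ne_three_pow (m k : ℕ) : 2 ^ (m + 1) ≠ 3 ^ k := by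
  intro h
  simpa [Nat.even_pow, (by decide : ¬Even 3)] using congrArg Even h

theorem odd_two_pow_succ_sub_three_pow (m k : ℕ) : Odd ((2 : ℤ) ^ (m + 1) - 3 ^ k) :=
  (Int.even_pow.mpr ⟨even_two, m.succ_ne_zero⟩).sub_odd (Odd.pow (by decide))

variable {m : ℕ} (v : Fin (m + 1) → ℕ)

def rotate : Fin (m + 1) → ℕ := fun j => v (j + 1)

theorem sum_ite_lt_succ (j : ℕ) :
    (∑ i : Fin (m + 1), if j + 1 < (i : ℕ) then v i else 0) =
      ∑ i : Fin m, if j < (i : ℕ) then v i.succ else 0 := by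
  simp [Fin.sum_univ_succ]

theorem sum_ite_lt_castSucc {j : ℕ} (hj : j < m) :
    (∑ i : Fin (m + 1), if j < (i : ℕ) then v i else 0) =
      (∑ i : Fin m, if j < (i : ℕ) then v i.castSucc else 0) + v (Fin.last m) := by
  simp [Fin.sum_univ_castSucc, hj]

theorem omegaF_succ : omegaF v = v 0 + omegaF (Fin.tail v) :=
  Fin.sum_univ_succ v

theorem rhoF_succ : rhoF v = v 0 * 3 ^ omegaF (Fin.tail v) + 2 * rhoF (Fin.tail v) := by
  unfold rhoF omegaF
  rw [Fin.sum_univ_succ, Finset.mul_sum]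
  congr 1
  · simp [Fin.sum_univ_succ, Fin.tail]
  · refine Finset.sum_congr rfl fun j _ => ?_
    simp only [Fin.val_succ, sum_ite_lt_succ, Fin.tail, pow_succ]
    ring

theorem rhoF_castSucc :
    rhoF v = 3 ^ v (Fin.last m) * rhoF (Fin.init v) + v (Fin.last m) * 2 ^ m := by
  unfold rhoF
  rw [Fin.sum_univ_castSucc, Finset.mul_sum]
  congr 1
  · refine Finset.sum_congr rfl fun j _ => ?_
    simp only [Fin.val_castSucc, sum_ite_lt_castSucc v j.isLt, Fin.init, pow_add]
    ring
  · have : (∑ i : Fin (m + 1), if m < (i : ℕ) then v i else 0) = 0 :=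
      Finset.sum_eq_zero fun i _ => if_neg (Nat.not_lt.mpr (Nat.lt_succ_iff.mp i.isLt))
    simp [this]

theorem init_rotate : Fin.init (rotate v) = Fin.tail v := by
  funext i
  simp [rotate, Fin.init, Fin.tail, Fin.coeSucc_eq_succ]

theorem rotate_last : rotate v (Fin.last m) = v 0 := by
  simp [rotate, Fin.last_add_one]

theorem omegaF_rotate : omegaF (rotate v) = omegaF v :=
  Equiv.sum_comp (Equiv.addRight 1) v

theorem rhoF_rotate :
    3 ^ v 0 * rhoF v + v 0 * 2 ^ (m + 1) = v 0 * 3 ^ omegaF v + 2 * rhoF (rotate v) := by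
  rw [rhoF_castSucc (rotate v), init_rotate, rotate_last, rhoF_succ v, omegaF_succ v]
  ring

theorem even_rhoF_iff : Even (rhoF v) ↔ Even (v 0) := by
  simp [rhoF_succ, Nat.even_add, Nat.even_mul, Nat.even_pow, (by decide : ¬Even 3)]

theorem xF_eq_intCast_div :
    xF v = ((rhoF v : ℤ) : ℚ) / ((2 ^ (m + 1) - 3 ^ omegaF v : ℤ) : ℚ) := by
  simp [xF]

theorem odd_xF_den : Odd (xF v).den := by
  rw [xF_eq_intCast_div]
  exact (Rat.odd_den_and_even_num_iff_of_odd (odd_two_pow_succ_sub_three_pow m _)).1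

theorem even_xF_num_iff : Even (xF v).num ↔ Even (v 0) := by
  rw [xF_eq_intCast_div,
    (Rat.odd_den_and_even_num_iff_of_odd (odd_two_pow_succ_sub_three_pow m _)).2,
    Int.even_coe_nat, even_rhoF_iff]

theorem two_mul_xF_rotate : 2 * xF (rotate v) = 3 ^ v 0 * xF v + v 0 := by
  have hD : (2 : ℚ) ^ (m + 1) - 3 ^ omegaF v ≠ 0 := by
    rw [sub_ne_zero]
    exact_mod_cast two_pow_succ_ne_three_pow m _
  have h : (3 ^ v 0 * rhoF v + v 0 * 2 ^ (m + 1) : ℚ) =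
      v 0 * 3 ^ omegaF v + 2 * rhoF (rotate v) := by
    exact_mod_cast rhoF_rotate v
  simp only [xF, omegaF_rotate]
  field_simp
  linarith

theorem T_xF (h0 : v 0 = 0 ∨ v 0 = 1) : T (xF v) = xF (rotate v) := by
  have h := two_mul_xF_rotate v
  rcases h0 with h0 | h0
  · rw [T, if_pos ((even_xF_num_iff v).mpr (by simp [h0]))]
    simp only [h0, pow_zero, one_mul, Nat.cast_zero, add_zero] at h
    linarith
  · rw [T, if_neg (by simp [even_xF_num_iff, h0])]
    simp only [h0, pow_one, Nat.cast_one] at h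
    linarith

open Fin.NatCast in
theorem rotate_iterate_apply (k : ℕ) (j : Fin (m + 1)) :
    rotate^[k] v j = v (j + (k : Fin (m + 1))) := by
  induction k generalizing v with
  | zero => simp
  | succ k ih =>
    rw [Function.iterate_succ_apply, ih, rotate, Nat.cast_succ, add_assoc]

theorem T_iterate_xF (hv : ∀ j, v j = 0 ∨ v j = 1) (k : ℕ) :
    T^[k] (xF v) = xF (rotate^[k] v) := by
  induction k generalizing v with
  | zero => rfl
  | succ k ih =>
    rw [Function.iterate_succ_apply, T_xF v (hv 0), Function.iterate_succ_apply]
    exact ih _ fun j => hv _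

end Collatz

/-- Existence half of the Böhm–Sontacchi–Lagarias theorem: for every `0-1` vector
`v` of length `n ≥ 1`, `2^n ≠ 3^{ω(v)}`, the rational `x(v) = ρ(v)/(2^n - 3^{ω(v)})`
has odd denominator, is periodic of period `n` under `T`, and its parity sequence
starts with `v`. -/
theorem stmt_3 (n : ℕ) (hn : 1 ≤ n) (v : Fin n → ℕ) (hv01 : ∀ j, v j = 0 ∨ v j = 1) :
    (2 : ℕ) ^ n ≠ 3 ^ omegaF v ∧
    Odd (xF v).den ∧
    T^[n] (xF v) = xF v ∧
    ∀ j : Fin n, (v j = 1 ↔ Odd ((T^[(j : ℕ)] (xF v)).num)) ∧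
      (v j = 0 ↔ Even ((T^[(j : ℕ)] (xF v)).num)) := by
  obtain ⟨m, rfl⟩ : ∃ m, n = m + 1 := ⟨n - 1, by omega⟩
  refine ⟨Collatz.two_pow_succ_ne_three_pow m _, Collatz.odd_xF_den v, ?_, fun j => ?_⟩
  · rw [Collatz.T_iterate_xF v hv01]
    congr 1
    funext j
    simp [Collatz.rotate_iterate_apply]
  · have hpar := Collatz.even_xF_num_iff (Collatz.rotate^[j] v)
    rw [Collatz.rotate_iterate_apply, zero_add, Fin.cast_val_eq_self] at hpar
    rw [Collatz.T_iterate_xF v hv01, ← Int.not_even_iff_odd, hpar]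
    rcases hv01 j with h | h <;> simp [h]
end

section
/- Let x ∈ ℚ[(2)] and n ≥ 1 satisfy T^n(x) = x, and let v = (v_0,…,v_{n−1}) ∈ {0,1}^n be the parity vector of x, i.e., v_j = 1 if T^j(x) is odd and v_j = 0 if T^j(x) is even, for 0 ≤ j < n. Then x = ρ(v)/(2^n − 3^{ω(v)}). In particular, a point of ℚ[(2)] that is periodic of period n under T is uniquely determined by the first n terms of its parity sequence (uniqueness half of the Böhm–Sontacchi–Lagarias theorem). -/
/-- Uniqueness half of the Böhm–Sontacchi–Lagarias theorem: if `x ∈ ℚ[(2)]` is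
periodic of period `n` under `T` and `v` is its parity vector
(`v_j = 1` iff `T^j x` is odd), then `x = ρ(v)/(2^n - 3^{ω(v)})`. -/
theorem stmt_4 (x : ℚ) (hx : Odd x.den) (n : ℕ) (hn : 1 ≤ n) (hper : T^[n] x = x)
    (v : Fin n → ℕ) (hv01 : ∀ j, v j = 0 ∨ v j = 1)
    (hpar : ∀ j : Fin n, (v j = 1 ↔ Odd ((T^[(j : ℕ)] x).num)) ∧
      (v j = 0 ↔ Even ((T^[(j : ℕ)] x).num))) :
    x = (rhoF v : ℚ) / ((2 : ℚ) ^ n - (3 : ℚ) ^ omegaF v) := by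
  classical
  set w : ℕ → ℕ := fun j => if h : j < n then v ⟨j, h⟩ else 0 with hw
  have key : ∀ k, k ≤ n → (2:ℚ)^k * T^[k] x
      = 3 ^ (∑ j ∈ Finset.range k, w j) * x
        + ∑ j ∈ Finset.range k, (w j : ℚ) * 3 ^ (∑ i ∈ Finset.Ico (j+1) k, w i) * 2 ^ j := by
    intro k
    induction k with
    | zero => simp
    | succ k ih =>
      intro hk
      have hkn : k < n := hk
      have ih' := ih (le_of_lt hkn)
      have hwk : w k = v ⟨k, hkn⟩ := by simp [hw, hkn]
      have hstep : T (T^[k] x) = ((3:ℚ) ^ w k * (T^[k] x) + (w k : ℚ)) / 2 := by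
        rcases hv01 ⟨k, hkn⟩ with h0 | h1
        · have he : Even ((T^[k] x).num) := by
            have := ((hpar ⟨k, hkn⟩).2).1 h0
            simpa using this
          rw [T, if_pos he, hwk, h0]
          push_cast; ring
        · have hodd : Odd ((T^[k] x).num) := by
            have := ((hpar ⟨k, hkn⟩).1).1 h1
            simpa using this
          have hne : ¬ Even ((T^[k] x).num) := Int.not_even_iff_odd.mpr hodd
          rw [T, if_neg hne, hwk, h1]
          push_cast; ring
      have hR : (∑ j ∈ Finset.range (k+1), (w j : ℚ) * 3 ^ (∑ i ∈ Finset.Ico (j+1) (k+1), w i) * 2 ^ j)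
          = 3 ^ w k * (∑ j ∈ Finset.range k, (w j : ℚ) * 3 ^ (∑ i ∈ Finset.Ico (j+1) k, w i) * 2 ^ j)
            + (w k : ℚ) * 2 ^ k := by
        rw [Finset.sum_range_succ, Finset.mul_sum]
        have hlast : (∑ i ∈ Finset.Ico (k+1) (k+1), w i) = 0 := by simp
        rw [hlast]
        congr 1
        · apply Finset.sum_congr rfl
          intro j hj
          have hjk : j < k := Finset.mem_range.mp hj
          have : (∑ i ∈ Finset.Ico (j+1) (k+1), w i)
              = (∑ i ∈ Finset.Ico (j+1) k, w i) + w k :=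
            Finset.sum_Ico_succ_top hjk w
          rw [this, pow_add]
          ring
        · simp
      rw [Function.iterate_succ_apply', hstep, Finset.sum_range_succ, pow_succ, pow_add]
      rw [hR]
      linear_combination (3:ℚ) ^ (w k) * ih'
  have hkey := key n le_rfl
  rw [hper] at hkey
  -- rewrite omegaF and rhoF in terms of w
  have homega : omegaF v = ∑ j ∈ Finset.range n, w j := by
    rw [omegaF, Finset.sum_range fun j => w j]
    apply Finset.sum_congr rfl
    intro j _
    simp [hw, j.isLt]
  have hinner : ∀ j : Fin n, (∑ i : Fin n, if (j : ℕ) < (i : ℕ) then v i else 0)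
      = ∑ i ∈ Finset.Ico ((j:ℕ)+1) n, w i := by
    intro j
    have h1 : (∑ i : Fin n, if (j : ℕ) < (i : ℕ) then v i else 0)
        = ∑ i ∈ Finset.range n, if (j:ℕ) < i then w i else 0 := by
      rw [Finset.sum_range fun i => if (j:ℕ) < i then w i else 0]
      apply Finset.sum_congr rfl
      intro i _
      simp [hw, i.isLt]
    rw [h1, Finset.range_eq_Ico,
      ← Finset.sum_Ico_consecutive _ (Nat.zero_le ((j:ℕ)+1)) (Nat.succ_le_of_lt j.isLt)]
    have hz : (∑ i ∈ Finset.Ico 0 ((j:ℕ)+1), if (j:ℕ) < i then w i else 0) = 0 := by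
      apply Finset.sum_eq_zero
      intro i hi
      have : i < (j:ℕ)+1 := (Finset.mem_Ico.mp hi).2
      simp [Nat.lt_succ_iff.mp this, Nat.not_lt.mpr (Nat.lt_succ_iff.mp this)]
    rw [hz, zero_add]
    apply Finset.sum_congr rfl
    intro i hi
    have : (j:ℕ) < i := Nat.lt_of_succ_le (Finset.mem_Ico.mp hi).1
    simp [this]
  have hrho : (rhoF v : ℚ) = ∑ j ∈ Finset.range n, (w j : ℚ) * 3 ^ (∑ i ∈ Finset.Ico (j+1) n, w i) * 2 ^ j := by
    rw [rhoF]
    push_cast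
    rw [Finset.sum_range fun j => (w j : ℚ) * 3 ^ (∑ i ∈ Finset.Ico (j+1) n, w i) * 2 ^ j]
    apply Finset.sum_congr rfl
    intro j _
    rw [hinner j]
    simp [hw, j.isLt]
  have hne : (2:ℚ)^n - (3:ℚ)^(omegaF v) ≠ 0 := by
    intro h
    have heq : (2:ℚ)^n = (3:ℚ)^(omegaF v) := by linarith
    have hcast : (2^n : ℕ) = (3^(omegaF v) : ℕ) := by exact_mod_cast heq
    have hdvd : (2:ℕ) ∣ 2^n := dvd_pow_self 2 (by omega)
    rw [hcast] at hdvd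
    have := Nat.Prime.dvd_of_dvd_pow Nat.prime_two hdvd
    norm_num at this
  rw [homega] at hne
  rw [hrho, homega]
  field_simp
  linear_combination hkey
end

section
/- For every n ≥ 1 and every 0–1 vector v = (v_0, v_1, …, v_{n−1}) ∈ {0,1}^n, one has T(x(v)) = x(v'), where v' = (v_1, …, v_{n−1}, v_0) is the left cyclic rotation of v. Consequently, the points of the T-cycle through x(v) are exactly the points x(w) as w ranges over the cyclic rotations of v. -/
def rotF {m : ℕ} (v : Fin (m+1) → ℕ) : Fin (m+1) → ℕ :=
  fun i => v ⟨((i : ℕ) + 1) % (m+1), Nat.mod_lt _ (by omega)⟩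

lemma omega_rot {m : ℕ} (v : Fin (m+1) → ℕ) : omegaF (rotF v) = omegaF v := by
  unfold omegaF rotF
  apply Fintype.sum_equiv (finRotate (m+1))
  intro i
  congr 1
  ext
  simp [finRotate_succ_apply, Fin.val_add, Nat.add_mod]

lemma h1h2 {m : ℕ} (v : Fin (m+1) → ℕ) :
    rhoF v = v 0 * 3 ^ (∑ i : Fin m, v i.succ)
      + ∑ j : Fin m, v j.succ * 3 ^ (∑ i : Fin m, if (j:ℕ) < (i:ℕ) then v i.succ else 0) * 2 ^ ((j:ℕ)+1)
    ∧ rhoF (rotF v) = (∑ j : Fin m, v j.succ * 3 ^ ((∑ i : Fin m, if (j:ℕ) < (i:ℕ) then v i.succ else 0) + v 0) * 2 ^ (j:ℕ))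
      + v 0 * 2 ^ m := by
  constructor
  · unfold rhoF
    rw [Fin.sum_univ_succ]
    congr 1
    · rw [Fin.sum_univ_succ]
      simp
    · apply Finset.sum_congr rfl
      intro j _
      rw [Fin.sum_univ_succ]
      simp [Nat.succ_lt_succ_iff]
  · unfold rhoF
    rw [Fin.sum_univ_castSucc]
    have hlast : rotF v (Fin.last m) = v 0 := by
      unfold rotF
      congr 1
      ext
      simp
    congr 1
    · apply Finset.sum_congr rfl
      intro j _
      have e1 : rotF v j.castSucc = v j.succ := by
        unfold rotF
        congr 1
        ext
        simp [Nat.mod_eq_of_lt (by omega : (j:ℕ)+1 < m+1)]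
      rw [Fin.sum_univ_castSucc]
      simp only [Fin.coe_castSucc, Fin.val_last, Fin.val_succ]
      rw [e1, hlast, if_pos j.isLt]
      congr 2
      congr 1
      congr 1
      apply Finset.sum_congr rfl
      intro i _
      have e2 : rotF v i.castSucc = v i.succ := by
        unfold rotF
        congr 1
        ext
        simp [Nat.mod_eq_of_lt (by omega : (i:ℕ)+1 < m+1)]
      rw [e2]
    · rw [hlast]
      have : (∑ i : Fin (m+1), if ((Fin.last m : Fin (m+1)):ℕ) < (i:ℕ) then rotF v i else 0) = 0 := by
        apply Finset.sum_eq_zero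
        intro i _
        rw [if_neg]
        simp only [Fin.val_last]
        omega
      rw [this]
      simp

lemma key {m : ℕ} (v : Fin (m+1) → ℕ) :
    2 * rhoF (rotF v) + v 0 * 3 ^ omegaF v
      = 3 ^ (v 0) * rhoF v + v 0 * 2 ^ (m+1) := by
  obtain ⟨h1, h2⟩ := h1h2 v
  have h3 : omegaF v = v 0 + ∑ i : Fin m, v i.succ := by
    unfold omegaF
    rw [Fin.sum_univ_succ]
  have hA : (∑ j : Fin m, v j.succ * 3 ^ ((∑ i : Fin m, if (j:ℕ) < (i:ℕ) then v i.succ else 0) + v 0) * 2 ^ (j:ℕ)) * 2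
      = 3 ^ v 0 * ∑ j : Fin m, v j.succ * 3 ^ (∑ i : Fin m, if (j:ℕ) < (i:ℕ) then v i.succ else 0) * 2 ^ ((j:ℕ)+1) := by
    rw [Finset.sum_mul, Finset.mul_sum]
    exact Finset.sum_congr rfl (fun j _ => by rw [pow_add, pow_succ]; ring)
  rw [h1, h2, h3, pow_add, pow_succ, mul_add (3 ^ v 0), ← hA]
  ring

lemma rho_parity {m : ℕ} (v : Fin (m+1) → ℕ) :
    Even (rhoF v) ↔ Even (v 0) := by
  obtain ⟨h1, _⟩ := h1h2 v
  rw [h1]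
  have hsum : Even (∑ j : Fin m, v j.succ * 3 ^ (∑ i : Fin m, if (j:ℕ) < (i:ℕ) then v i.succ else 0) * 2 ^ ((j:ℕ)+1)) := by
    apply Finset.even_sum
    intro j _
    exact even_iff_two_dvd.mpr (dvd_mul_of_dvd_right (dvd_pow_self 2 (Nat.succ_ne_zero _)) _)
  rw [Nat.even_add, iff_true_intro hsum, iff_true]
  simp [Nat.even_mul, Nat.even_pow, (by decide : ¬ Even 3)]

lemma D_odd {m : ℕ} (v : Fin (m+1) → ℕ) :
    ¬ Even ((2:ℤ) ^ (m+1) - 3 ^ omegaF v) := by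
  rw [Int.even_sub]
  simp [Int.even_pow, (by decide : ¬ Even (3:ℤ))]

lemma D_ne {m : ℕ} (v : Fin (m+1) → ℕ) :
    ((2:ℚ) ^ (m+1) - (3:ℚ) ^ omegaF v) ≠ 0 := by
  intro h
  have h' : ((2:ℤ) ^ (m+1) - 3 ^ omegaF v : ℤ) = 0 := by exact_mod_cast h
  have := D_odd v
  rw [h'] at this
  exact this Even.zero

lemma num_parity {m : ℕ} (v : Fin (m+1) → ℕ) :
    (Even (xF v).num ↔ Even (v 0)) := by
  set D : ℤ := (2:ℤ) ^ (m+1) - 3 ^ omegaF v with hDdef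
  have hDq : ((2:ℚ) ^ (m+1) - (3:ℚ) ^ omegaF v) = (D : ℚ) := by push_cast [hDdef]; ring
  have hx : xF v = ((rhoF v : ℤ) : ℚ) / (D : ℚ) := by rw [xF, hDq]; norm_num
  have hDne : (D : ℚ) ≠ 0 := by rw [← hDq]; exact D_ne v
  -- denominator is odd
  have hden : ¬ Even ((xF v).den : ℤ) := by
    intro he
    have hdvd : ((xF v).den : ℤ) ∣ D := by
      rw [hx, ← Rat.divInt_eq_div]
      exact Rat.den_dvd _ _
    exact D_odd v (even_iff_two_dvd.mpr (dvd_trans he.two_dvd hdvd))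
  have h2 : ((rhoF v : ℤ):ℚ)/(D:ℚ) = ((xF v).num : ℚ)/((xF v).den:ℚ) := by
    rw [← hx, Rat.num_div_den]
  rw [div_eq_div_iff hDne (by exact_mod_cast (xF v).den_ne_zero : ((xF v).den:ℚ) ≠ 0)] at h2
  have hz : ((rhoF v : ℤ)) * ((xF v).den : ℤ) = (xF v).num * D := by exact_mod_cast h2
  have hrho : Even ((rhoF v : ℤ)) ↔ Even (v 0) := by
    rw [Int.even_coe_nat]; exact rho_parity v
  constructor
  · intro h
    have hev : Even ((rhoF v : ℤ) * ((xF v).den : ℤ)) := by rw [hz]; exact h.mul_right D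
    rw [Int.even_mul] at hev
    rcases hev with hev | hev
    · exact hrho.mp hev
    · exact absurd hev hden
  · intro h
    have hev : Even ((xF v).num * D) := by rw [← hz]; exact (hrho.mpr h).mul_right _
    rw [Int.even_mul] at hev
    rcases hev with hev | hev
    · exact hev
    · exact absurd hev (D_odd v)

lemma step {m : ℕ} (v : Fin (m+1) → ℕ) (hv01 : ∀ j, v j = 0 ∨ v j = 1) :
    T (xF v) = xF (rotF v) := by
  have hD := D_ne v
  have hx : xF v * ((2:ℚ)^(m+1) - 3^omegaF v) = (rhoF v : ℚ) := div_mul_cancel₀ _ hD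
  have kq : (2:ℚ) * (rhoF (rotF v) : ℚ) + (v 0 : ℚ) * 3 ^ omegaF v
      = 3 ^ (v 0) * (rhoF v : ℚ) + (v 0 : ℚ) * 2 ^ (m+1) := by exact_mod_cast key v
  have hx2 : xF (rotF v) = (rhoF (rotF v) : ℚ) / ((2:ℚ)^(m+1) - 3^omegaF v) := by
    rw [xF, omega_rot]
  rcases hv01 0 with h0 | h0
  · have hnum : Even (xF v).num := (num_parity v).mpr (by simp [h0])
    unfold T
    rw [if_pos hnum, hx2, div_eq_div_iff (two_ne_zero) hD]
    rw [h0] at kq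
    norm_num at kq
    linear_combination hx - kq
  · have hnum : ¬ Even (xF v).num := fun h => by
      have := (num_parity v).mp h
      rw [h0] at this
      exact (by decide : ¬ Even 1) this
    unfold T
    rw [if_neg hnum, hx2, div_eq_div_iff (two_ne_zero) hD]
    rw [h0] at kq
    norm_num at kq
    linear_combination 3 * hx - kq


/-- `T` sends `x(v)` to `x(v')`, where `v'` is the left cyclic rotation of `v`;
consequently the points of the `T`-cycle through `x(v)` are exactly the `x(w)`
for `w` a cyclic rotation of `v`. -/
theorem stmt_5 (n : ℕ) (hn : 1 ≤ n) (v : Fin n → ℕ) (hv01 : ∀ j, v j = 0 ∨ v j = 1) :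
    (T (xF v) = xF (fun i : Fin n => v ⟨((i : ℕ) + 1) % n, Nat.mod_lt _ (by omega)⟩)) ∧
    (∀ m : ℕ, T^[m] (xF v) =
      xF (fun i : Fin n => v ⟨((i : ℕ) + m) % n, Nat.mod_lt _ (by omega)⟩)) := by
  obtain ⟨m, rfl⟩ : ∃ m, n = m + 1 := ⟨n - 1, by omega⟩
  have main : ∀ k : ℕ, T^[k] (xF v) =
      xF (fun i : Fin (m+1) => v ⟨((i : ℕ) + k) % (m+1), Nat.mod_lt _ (by omega)⟩) := by
    intro k
    induction k with
    | zero =>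
      simp only [Function.iterate_zero, id_eq]
      congr 1
      funext i
      congr 1
      ext
      simp [Nat.mod_eq_of_lt i.isLt]
    | succ k ih =>
      rw [Function.iterate_succ_apply', ih]
      rw [step (fun i : Fin (m+1) => v ⟨((i : ℕ) + k) % (m+1), Nat.mod_lt _ (by omega)⟩)
        (fun j => hv01 _)]
      congr 1
      funext i
      unfold rotF
      simp only
      congr 1
      ext
      simp only
      rw [Nat.mod_add_mod]
      congr 1
      omega
  refine ⟨?_, main⟩
  have h1 := main 1
  rw [Function.iterate_one] at h1
  exact h1
end

section
/- If x ∈ ℚ[(2)] is periodic under T, i.e., T^n(x) = x for some n ≥ 1, then the denominator k of x in lowest terms satisfies gcd(k, 6) = 1; equivalently, k ≡ 1 or 5 (mod 6). -/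
lemma padicValRat_three_div_two (y : ℚ) : padicValRat 3 (y / 2) = padicValRat 3 y := by
  rcases eq_or_ne y 0 with rfl | hy
  · simp
  rw [padicValRat.div hy two_ne_zero, sub_eq_self, show (2 : ℚ) = (2 : ℕ) by norm_num,
    padicValRat.of_nat, padicValNat.eq_zero_of_not_dvd (by norm_num)]
  rfl

lemma padicValRat_three_three_mul {y : ℚ} (hy : y ≠ 0) :
    padicValRat 3 (3 * y) = 1 + padicValRat 3 y := by
  rw [padicValRat.mul three_ne_zero hy, show (3 : ℚ) = (3 : ℕ) by norm_num,
    padicValRat.self (by norm_num)]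

lemma padicValRat_three_lt_three_mul_add_one {y : ℚ} (hy : padicValRat 3 y < 0) :
    padicValRat 3 y < padicValRat 3 (3 * y + 1) := by
  have hy0 : y ≠ 0 := by rintro rfl; simp at hy
  rcases eq_or_ne (3 * y + 1) 0 with h | h
  · rwa [h, padicValRat.zero]
  refine padicValRat.lt_add_of_lt h ?_ (by simpa using hy)
  rw [padicValRat_three_three_mul hy0]
  omega

lemma padicValRat_three_three_mul_add_one_nonneg {y : ℚ} (hy : 0 ≤ padicValRat 3 y) :
    0 ≤ padicValRat 3 (3 * y + 1) := by
  rcases eq_or_ne y 0 with rfl | hy0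
  · simp
  rcases eq_or_ne (3 * y + 1) 0 with h | h
  · rw [h, padicValRat.zero]
  refine le_trans ?_ (padicValRat.min_le_padicValRat_add h)
  rw [padicValRat_three_three_mul hy0, padicValRat.one]
  omega

lemma min_padicValRat_three_le_T (y : ℚ) :
    min (padicValRat 3 y) 0 ≤ min (padicValRat 3 (T y)) 0 := by
  unfold T
  split_ifs
  · rw [padicValRat_three_div_two]
  · rw [padicValRat_three_div_two]
    rcases lt_or_ge (padicValRat 3 y) 0 with hy | hy
    · have := padicValRat_three_lt_three_mul_add_one hy
      omega
    · have := padicValRat_three_three_mul_add_one_nonneg hy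
      omega

lemma padicValRat_three_lt_T_of_not_even {y : ℚ} (hy : padicValRat 3 y < 0)
    (hodd : ¬Even y.num) : padicValRat 3 y < padicValRat 3 (T y) := by
  rw [T, if_neg hodd, padicValRat_three_div_two]
  exact padicValRat_three_lt_three_mul_add_one hy

lemma min_padicValRat_three_le_iterate_T (y : ℚ) (k : ℕ) :
    min (padicValRat 3 y) 0 ≤ min (padicValRat 3 (T^[k] y)) 0 := by
  induction k with
  | zero => rfl
  | succ k ih =>
    rw [Function.iterate_succ_apply']
    exact ih.trans (min_padicValRat_three_le_T _)

lemma iterate_T_eq_div_pow {y : ℚ} (hy : padicValRat 3 y < 0) {k : ℕ}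
    (hk : min (padicValRat 3 (T^[k] y)) 0 = padicValRat 3 y) : T^[k] y = y / 2 ^ k := by
  induction k with
  | zero => simp
  | succ k ih =>
    rw [Function.iterate_succ_apply'] at hk ⊢
    have hz : min (padicValRat 3 (T^[k] y)) 0 = padicValRat 3 y := by
      have := min_padicValRat_three_le_iterate_T y k
      have := min_padicValRat_three_le_T (T^[k] y)
      omega
    have heven : Even (T^[k] y).num := by
      by_contra hodd
      have := padicValRat_three_lt_T_of_not_even (by omega) hodd
      omega
    rw [T, if_pos heven, ih hz, div_div, pow_succ]

lemma padicValRat_three_nonneg_of_periodic {x : ℚ} {n : ℕ} (hn : 1 ≤ n) (hper : T^[n] x = x) :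
    0 ≤ padicValRat 3 x := by
  by_contra! hx
  have hx0 : x ≠ 0 := by rintro rfl; simp at hx
  have hdiv := iterate_T_eq_div_pow hx (k := n) (by rw [hper]; omega)
  rw [hper, eq_div_iff (by positivity), mul_eq_left₀ hx0] at hdiv
  exact (one_lt_pow₀ one_lt_two (by omega : n ≠ 0)).ne' hdiv

lemma Rat.not_dvd_den_of_padicValRat_nonneg {p : ℕ} [hp : Fact p.Prime] {x : ℚ}
    (hx : 0 ≤ padicValRat p x) : ¬p ∣ x.den := by
  intro hden
  have hnum : ¬(p : ℤ) ∣ x.num := by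
    intro hnum
    have := Nat.dvd_gcd (Int.ofNat_dvd_left.mp hnum) hden
    rw [x.reduced, Nat.dvd_one] at this
    exact hp.out.one_lt.ne' this
  rw [padicValRat_def, padicValInt.eq_zero_of_not_dvd hnum] at hx
  have := one_le_padicValNat_of_dvd x.pos.ne' hden
  omega

/-- If `x ∈ ℚ[(2)]` is periodic under `T`, then its denominator `k` in lowest terms
satisfies `gcd(k, 6) = 1`, equivalently `k ≡ 1` or `5 (mod 6)`. -/
theorem stmt_6 (x : ℚ) (hx : Odd x.den) (n : ℕ) (hn : 1 ≤ n) (hper : T^[n] x = x) :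
    Nat.gcd x.den 6 = 1 ∧ (x.den % 6 = 1 ∨ x.den % 6 = 5) := by
  have h3 : ¬3 ∣ x.den :=
    Rat.not_dvd_den_of_padicValRat_nonneg (padicValRat_three_nonneg_of_periodic hn hper)
  have h2 : x.den % 2 = 1 := Nat.odd_iff.mp hx
  refine ⟨?_, by omega⟩
  exact Nat.Coprime.mul_right (Nat.coprime_two_right.mpr hx)
    (Nat.prime_three.coprime_iff_not_dvd.mpr h3).symm
end

section
/- Let k be a positive integer with gcd(k, 6) = 1. The set of T-cycles contained in D_k (i.e., of orbits {x, T(x), …, T^{n−1}(x)} of points x ∈ D_k with T^n(x) = x) is finite if and only if the set V(k) of primitive 0–1 vectors v (of any length) such that x(v) has denominator k in lowest terms is finite (Proposition 3.1, claim 1). -/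
/-- `ρ(v) = ∑_{j=0}^{n-1} v_j ⬝ 3^{v_{j+1} + ⋯ + v_{n-1}} ⬝ 2^j`, for a `0-1` vector
encoded as a list. -/
def rhoL : List ℕ → ℕ
  | [] => 0
  | a :: t => a * 3 ^ t.sum + 2 * rhoL t

/-- `x(v) = ρ(v) / (2^n - 3^{ω(v)})`, where `n` is the length of `v` and
`ω(v)` is the sum of its entries. -/
noncomputable def xL (l : List ℕ) : ℚ :=
  (rhoL l : ℚ) / ((2 : ℚ) ^ l.length - (3 : ℚ) ^ l.sum)

/-- A vector is primitive if its cyclic rotations are pairwise distinct, i.e. no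
nontrivial rotation fixes it. -/
def Primitive (l : List ℕ) : Prop := ∀ m, 1 ≤ m → m < l.length → l.rotate m ≠ l

/-- The set of `T`-cycles contained in `D_k`. -/
def cyclesIn (k : ℕ) : Set (Set ℚ) :=
  {c | ∃ x : ℚ, ∃ n : ℕ, 1 ≤ n ∧ x.den = k ∧ T^[n] x = x ∧
    c = {y | ∃ j : ℕ, T^[j] x = y}}

/-- `V(k)`: the set of primitive `0-1` vectors `v` (of any length `≥ 1`) such that
`x(v)` has denominator `k` in lowest terms. -/
def Vset (k : ℕ) : Set (List ℕ) :=
  {l | 1 ≤ l.length ∧ (∀ a ∈ l, a = 0 ∨ a = 1) ∧ Primitive l ∧ (xL l).den = k}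

open Function

/-! A periodic point `x` of `T` with period `n` satisfies `2ⁿ x = 3^ω x + ρ` for its parity vector
of length `n`, i.e. `x = x(v)` with `v` that parity vector. Conversely, since `2ⁿ - 3^ω` is odd,
the parity of `x(v)` is `v₀` and `T (x(v)) = x(v rotated by one)`, so `v` is the parity vector of
`x(v)` and, for primitive `v`, the length of `v` is the minimal period of `x(v)`. Hence `x` is a
bijection from `V(k)` onto the periodic points in `D_k`, and these are finite in number iff the
cycles they form are, each cycle being a finite set. -/

def parityBit (x : ℚ) : ℕ := if Even x.num then 0 else 1

noncomputable def parityVector (x : ℚ) (n : ℕ) : List ℕ :=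
  (List.range n).map fun j => parityBit (T^[j] x)

@[simp]
lemma length_parityVector (x : ℚ) (n : ℕ) : (parityVector x n).length = n := by
  simp [parityVector]

lemma getElem_parityVector (x : ℚ) (n j : ℕ) (h : j < (parityVector x n).length) :
    (parityVector x n)[j] = parityBit (T^[j] x) := by
  simp [parityVector]

lemma parityVector_succ (x : ℚ) (n : ℕ) :
    parityVector x (n + 1) = parityBit x :: parityVector (T x) n := by
  simp [parityVector, List.range_succ_eq_map, comp_def, iterate_succ_apply]

lemma parityVector_zero_or_one (x : ℚ) (n : ℕ) : ∀ a ∈ parityVector x n, a = 0 ∨ a = 1 := by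
  simp only [parityVector, List.mem_map]
  rintro a ⟨j, -, rfl⟩
  unfold parityBit
  split <;> simp

lemma two_mul_T (x : ℚ) : 2 * T x = 3 ^ parityBit x * x + parityBit x := by
  unfold T parityBit
  split <;> push_cast <;> ring

lemma two_pow_mul_iterate_T (n : ℕ) (x : ℚ) :
    2 ^ n * T^[n] x = 3 ^ (parityVector x n).sum * x + rhoL (parityVector x n) := by
  induction n generalizing x with
  | zero => simp [parityVector, rhoL]
  | succ n ih =>
    rw [parityVector_succ, iterate_succ_apply, pow_succ', mul_assoc, ih, rhoL, List.sum_cons]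
    push_cast
    linear_combination (3 : ℚ) ^ (parityVector (T x) n).sum * two_mul_T x

lemma odd_two_pow_sub_three_pow {n : ℕ} (hn : n ≠ 0) (m : ℕ) : Odd ((2 : ℤ) ^ n - 3 ^ m) :=
  (Int.even_pow.mpr ⟨even_two, hn⟩).sub_odd (Odd.pow (by decide))

lemma two_pow_sub_three_pow_ne_zero {n : ℕ} (hn : n ≠ 0) (m : ℕ) : (2 : ℚ) ^ n - 3 ^ m ≠ 0 := by
  have h := odd_two_pow_sub_three_pow hn m
  have : (2 : ℤ) ^ n - 3 ^ m ≠ 0 := by rintro h0; rw [h0] at h; simp at h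
  exact_mod_cast this

lemma xL_parityVector_of_isPeriodicPt {n : ℕ} {x : ℚ} (hn : n ≠ 0) (hx : IsPeriodicPt T n x) :
    xL (parityVector x n) = x := by
  have h := two_pow_mul_iterate_T n x
  rw [hx.eq] at h
  rw [xL, length_parityVector, div_eq_iff (two_pow_sub_three_pow_ne_zero hn _)]
  linear_combination -h

lemma even_num_div_iff {a b : ℤ} (hb : Odd b) : Even ((a : ℚ) / b).num ↔ Even a := by
  set q : ℚ := a / b with hq
  have hb' : ¬ Even b := Int.not_even_iff_odd.mpr hb
  have hcross : q.num * b = a * q.den := by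
    have hb0 : (b : ℚ) ≠ 0 := by rintro h0; norm_cast at h0; rw [h0] at hb'; simp at hb'
    have : (q.num : ℚ) * b = a * q.den := by
      rw [← Rat.mul_den_eq_num, hq]
      field_simp
    exact_mod_cast this
  have hden : ¬ Even (q.den : ℤ) := fun h => by
    have : (q.den : ℤ) ∣ b := by
      rw [hq, ← Rat.divInt_eq_div]
      exact Rat.den_dvd a b
    exact hb' (even_iff_two_dvd.mpr (h.two_dvd.trans this))
  calc Even q.num ↔ Even (q.num * b) := by simp [Int.even_mul, hb']
    _ ↔ Even (a * q.den) := by rw [hcross]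
    _ ↔ Even a := by simp [Int.even_mul, hden]

lemma even_num_xL_iff {l : List ℕ} (hl : l ≠ []) : Even (xL l).num ↔ Even (rhoL l) := by
  have hD := odd_two_pow_sub_three_pow (List.length_pos_iff.mpr hl).ne' l.sum
  have := even_num_div_iff (a := rhoL l) hD
  push_cast at this
  rw [xL]
  exact this.trans (Int.even_coe_nat _)

lemma parityBit_xL_cons {a : ℕ} (ha : a = 0 ∨ a = 1) (t : List ℕ) : parityBit (xL (a :: t)) = a := by
  have h := even_num_xL_iff (List.cons_ne_nil a t)
  rw [rhoL, Nat.even_add, Nat.even_mul] at h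
  rcases ha with rfl | rfl <;> simp [parityBit, h, Nat.even_pow, (by decide : ¬ Even 3)]

lemma rhoL_append_singleton (t : List ℕ) (a : ℕ) :
    rhoL (t ++ [a]) = 3 ^ a * rhoL t + a * 2 ^ t.length := by
  induction t with
  | nil => simp [rhoL]
  | cons b u ih =>
    simp only [List.cons_append, rhoL, ih, List.sum_append, List.sum_singleton, List.length_cons]
    ring

lemma two_mul_xL_append_singleton (a : ℕ) (t : List ℕ) :
    2 * xL (t ++ [a]) = 3 ^ a * xL (a :: t) + a := by
  have hD := two_pow_sub_three_pow_ne_zero (n := t.length + 1) (by omega) (a + t.sum)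
  simp only [xL, rhoL, rhoL_append_singleton, List.length_append, List.length_cons,
    List.length_nil, List.sum_append, List.sum_cons, List.sum_nil, add_zero, zero_add]
  rw [add_comm t.sum a]
  field_simp
  push_cast
  ring

lemma T_xL_cons {a : ℕ} (ha : a = 0 ∨ a = 1) (t : List ℕ) : T (xL (a :: t)) = xL (t ++ [a]) := by
  have h := two_mul_T (xL (a :: t))
  rw [parityBit_xL_cons ha, ← two_mul_xL_append_singleton] at h
  exact mul_left_cancel₀ two_ne_zero h

lemma T_xL {l : List ℕ} (hl : ∀ a ∈ l, a = 0 ∨ a = 1) : T (xL l) = xL (l.rotate 1) := by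
  cases l with
  | nil => simp [xL, rhoL, T]
  | cons a t => rw [List.rotate_cons_succ, List.rotate_zero, T_xL_cons (hl a List.mem_cons_self)]

lemma iterate_T_xL {l : List ℕ} (hl : ∀ a ∈ l, a = 0 ∨ a = 1) (m : ℕ) :
    T^[m] (xL l) = xL (l.rotate m) := by
  induction m with
  | zero => simp
  | succ m ih =>
    rw [iterate_succ_apply', ih, T_xL fun a ha => hl a (List.mem_rotate.mp ha), List.rotate_rotate]

lemma isPeriodicPt_xL {l : List ℕ} (hl : ∀ a ∈ l, a = 0 ∨ a = 1) :
    IsPeriodicPt T l.length (xL l) := by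
  rw [IsPeriodicPt, IsFixedPt, iterate_T_xL hl, List.rotate_length]

lemma parityBit_xL {l : List ℕ} (hl : ∀ a ∈ l, a = 0 ∨ a = 1) (h : 0 < l.length) :
    parityBit (xL l) = l[0] := by
  cases l with
  | nil => simp at h
  | cons a t => exact parityBit_xL_cons (hl a List.mem_cons_self) t

lemma parityVector_xL {l : List ℕ} (hl : ∀ a ∈ l, a = 0 ∨ a = 1) :
    parityVector (xL l) l.length = l := by
  refine List.ext_getElem (length_parityVector _ _) fun j hj hjl => ?_
  have hrot : 0 < (l.rotate j).length := by rw [List.length_rotate]; omega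
  rw [getElem_parityVector, iterate_T_xL hl,
    parityBit_xL (fun a ha => hl a (List.mem_rotate.mp ha)) hrot, List.getElem_rotate]
  simp [Nat.mod_eq_of_lt hjl]

lemma parityVector_minimalPeriod_xL {l : List ℕ} (hl : ∀ a ∈ l, a = 0 ∨ a = 1)
    (hl1 : 1 ≤ l.length) (hp : Primitive l) :
    parityVector (xL l) (minimalPeriod T (xL l)) = l := by
  suffices hd : minimalPeriod T (xL l) = l.length by rw [hd, parityVector_xL hl]
  have hper := isPeriodicPt_xL hl
  have hd0 := hper.minimalPeriod_pos hl1
  refine (hper.minimalPeriod_le hl1).eq_or_lt.resolve_right fun hlt => hp _ hd0 hlt ?_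
  have hrot : ∀ a ∈ l.rotate (minimalPeriod T (xL l)), a = 0 ∨ a = 1 :=
    fun a ha => hl a (List.mem_rotate.mp ha)
  rw [← parityVector_xL hrot, ← iterate_T_xL hl, iterate_minimalPeriod, List.length_rotate,
    parityVector_xL hl]

lemma exists_primitive_xL_eq {x : ℚ} (hx : x ∈ periodicPts T) :
    ∃ w : List ℕ, 1 ≤ w.length ∧ (∀ a ∈ w, a = 0 ∨ a = 1) ∧ Primitive w ∧ xL w = x := by
  have hd0 := minimalPeriod_pos_of_mem_periodicPts hx
  have hxw := xL_parityVector_of_isPeriodicPt hd0.ne' (isPeriodicPt_minimalPeriod T x)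
  refine ⟨parityVector x (minimalPeriod T x), by simpa [Nat.one_le_iff_ne_zero] using hd0.ne', parityVector_zero_or_one x _,
    fun m hm hmd hrot => ?_, hxw⟩
  rw [length_parityVector] at hmd
  refine not_isPeriodicPt_of_pos_of_lt_minimalPeriod (by omega) hmd ?_
  rw [IsPeriodicPt, IsFixedPt, ← hxw, iterate_T_xL (parityVector_zero_or_one x _), hrot]

lemma injOn_xL_Vset (k : ℕ) : Set.InjOn xL (Vset k) :=
  Set.LeftInvOn.injOn (f₁' := fun x => parityVector x (minimalPeriod T x))
    fun _ ⟨hl1, hl, hp, _⟩ => parityVector_minimalPeriod_xL hl hl1 hp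

lemma image_xL_Vset (k : ℕ) : xL '' Vset k = {x | x.den = k ∧ x ∈ periodicPts T} := by
  ext x
  constructor
  · rintro ⟨l, ⟨hl1, hl, -, rfl⟩, rfl⟩
    exact ⟨rfl, mk_mem_periodicPts hl1 (isPeriodicPt_xL hl)⟩
  · rintro ⟨rfl, hx⟩
    obtain ⟨w, hw1, hw, hwp, rfl⟩ := exists_primitive_xL_eq hx
    exact ⟨w, ⟨hw1, hw, hwp, rfl⟩, rfl⟩

lemma cyclesIn_eq_image (k : ℕ) :
    cyclesIn k = (fun x => Set.range fun j => T^[j] x) '' {x | x.den = k ∧ x ∈ periodicPts T} := by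
  ext c
  simp only [cyclesIn, Set.mem_image, Set.mem_ofPred_eq, mem_periodicPts]
  constructor
  · rintro ⟨x, n, hn, hk, hx, rfl⟩
    exact ⟨x, ⟨hk, n, hn, hx⟩, rfl⟩
  · rintro ⟨x, ⟨hk, n, hn, hx⟩, rfl⟩
    exact ⟨x, n, hn, hk, hx, rfl⟩

lemma finite_range_iterate_of_mem_periodicPts {α : Type*} {f : α → α} {x : α}
    (hx : x ∈ periodicPts f) : (Set.range fun j => f^[j] x).Finite := by
  refine ((Set.finite_Iio (minimalPeriod f x)).image fun j => f^[j] x).subset ?_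
  rintro _ ⟨j, rfl⟩
  exact ⟨j % minimalPeriod f x, Nat.mod_lt _ (minimalPeriod_pos_of_mem_periodicPts hx),
    iterate_mod_minimalPeriod_eq⟩

lemma finite_image_range_iterate_iff {α : Type*} {f : α → α} {s : Set α}
    (hs : s ⊆ periodicPts f) : ((fun x => Set.range fun j => f^[j] x) '' s).Finite ↔ s.Finite := by
  refine ⟨fun h => ?_, fun h => h.image _⟩
  refine (h.sUnion ?_).subset fun x hx => ⟨_, ⟨x, hx, rfl⟩, 0, rfl⟩
  rintro _ ⟨x, hx, rfl⟩
  exact finite_range_iterate_of_mem_periodicPts (hs hx)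

theorem stmt_8_general (k : ℕ) :
    (cyclesIn k).Finite ↔ (Vset k).Finite := by
  rw [cyclesIn_eq_image, finite_image_range_iterate_iff fun _ hx => hx.2, ← image_xL_Vset,
    Set.finite_image_iff (injOn_xL_Vset k)]

/-- Proposition 3.1, claim 1: the set of `T`-cycles contained in `D_k` is finite
iff `V(k)` is finite. -/
theorem stmt_8 (k : ℕ) (hk : 0 < k) (h6 : Nat.gcd k 6 = 1) :
    (cyclesIn k).Finite ↔ (Vset k).Finite :=
  stmt_8_general k
end

section
/- For every n ≥ 1, the number I(n) of T-cycles of exact length n in ℚ[(2)] (orbits {x, T(x), …, T^{n−1}(x)} with x ∈ ℚ[(2)], T^n(x) = x, and T^m(x) ≠ x for 1 ≤ m < n) satisfies I(n) = (1/n) ∑_{d | n} μ(d) · 2^{n/d}, where μ is the Möbius function (Eq. 2.5 of Lagarias 1990). -/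
/-- The set of `T`-cycles of exact length `n` in `ℚ[(2)]`. -/
def cyclesOfLength (n : ℕ) : Set (Set ℚ) :=
  {c | ∃ x : ℚ, Odd x.den ∧ T^[n] x = x ∧ (∀ m, 1 ≤ m → m < n → T^[m] x ≠ x) ∧
    c = {y | ∃ j : ℕ, T^[j] x = y}}

namespace Function

open Set

variable {α : Type*} (f : α → α)

lemma minimalPeriod_eq_iff_of_pos {n : ℕ} (hn : 0 < n) {x : α} :
    minimalPeriod f x = n ↔ f^[n] x = x ∧ ∀ m, 1 ≤ m → m < n → f^[m] x ≠ x := by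
  refine ⟨fun h => ⟨h ▸ iterate_minimalPeriod, fun m hm hmn => ?_⟩, fun ⟨hx, hmin⟩ => ?_⟩
  · exact not_isPeriodicPt_of_pos_of_lt_minimalPeriod (by omega) (h ▸ hmn)
  · have hpos := IsPeriodicPt.minimalPeriod_pos hn hx
    refine (IsPeriodicPt.minimalPeriod_le hn hx).antisymm (not_lt.1 fun hlt => ?_)
    exact hmin _ hpos hlt iterate_minimalPeriod

def forwardOrbit (x : α) : Set α := range (f^[·] x)

lemma forwardOrbit_eq_of_mem {x y : α} (hx : x ∈ periodicPts f) (hy : y ∈ forwardOrbit f x) :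
    forwardOrbit f y = forwardOrbit f x := by
  obtain ⟨j, rfl⟩ := hy
  have hy : f^[j] x ∈ periodicPts f := minimalPeriod_pos_iff_mem_periodicPts.1
    ((minimalPeriod_apply_iterate hx j).symm ▸ minimalPeriod_pos_iff_mem_periodicPts.2 hx)
  ext z
  rw [forwardOrbit, forwardOrbit, mem_range, mem_range, ← mem_periodicOrbit_iff hx,
    ← mem_periodicOrbit_iff hy, periodicOrbit_apply_iterate_eq hx]

lemma ncard_forwardOrbit {x : α} (hx : x ∈ periodicPts f) :
    (forwardOrbit f x).ncard = minimalPeriod f x := by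
  have horbit : forwardOrbit f x = (f^[·] x) '' Iio (minimalPeriod f x) := by
    refine (image_subset_range _ _).antisymm' ?_
    rintro _ ⟨j, rfl⟩
    exact ⟨j % minimalPeriod f x, Nat.mod_lt _ (minimalPeriod_pos_of_mem_periodicPts hx),
      iterate_mod_minimalPeriod_eq⟩
  rw [horbit, iterate_injOn_Iio_minimalPeriod.ncard_image, ncard_Iio_nat]

lemma ncard_eq_mul_ncard_image_forwardOrbit {E : Set α} {n : ℕ} (hn : 0 < n) (hE : E.Finite)
    (hmaps : MapsTo f E E) (hper : ∀ x ∈ E, minimalPeriod f x = n) :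
    E.ncard = n * (forwardOrbit f '' E).ncard := by
  have hperiodic : ∀ x ∈ E, x ∈ periodicPts f := fun x hx =>
    minimalPeriod_pos_iff_mem_periodicPts.1 (hper x hx ▸ hn)
  have hsub : ∀ x ∈ E, forwardOrbit f x ⊆ E := by
    rintro x hx _ ⟨j, rfl⟩
    exact hmaps.iterate j hx
  have hunion : ⋃ c ∈ forwardOrbit f '' E, id c = E := by
    refine subset_antisymm (iUnion₂_subset (forall_mem_image.2 hsub)) fun x hx => ?_
    exact mem_biUnion (mem_image_of_mem _ hx) ⟨0, rfl⟩
  have hdisj : (forwardOrbit f '' E).PairwiseDisjoint id := by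
    rintro _ ⟨x, hx, rfl⟩ _ ⟨y, hy, rfl⟩ hne
    refine disjoint_left.2 fun z hzx hzy => hne ?_
    rw [← forwardOrbit_eq_of_mem f (hperiodic x hx) hzx,
      forwardOrbit_eq_of_mem f (hperiodic y hy) hzy]
  conv_lhs => rw [← hunion]
  rw [(hE.image (forwardOrbit f)).ncard_biUnion (s := id)
      (forall_mem_image.2 fun x hx => hE.subset (hsub x hx)) hdisj,
    ← finsum_one, mul_finsum_mem]
  refine finsum_mem_congr rfl (forall_mem_image.2 fun x hx => ?_)
  rw [id, ncard_forwardOrbit f (hperiodic x hx), hper x hx, mul_one]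

variable (S : Set α)

lemma ncard_isPeriodicPt_eq_sum_ncard_minimalPeriod {n : ℕ} (hn : 0 < n)
    (hfin : {x | x ∈ S ∧ IsPeriodicPt f n x}.Finite) :
    {x | x ∈ S ∧ IsPeriodicPt f n x}.ncard =
      ∑ d ∈ n.divisors, {x | x ∈ S ∧ minimalPeriod f x = d}.ncard := by
  have hunion : {x | x ∈ S ∧ IsPeriodicPt f n x} =
      ⋃ d ∈ (n.divisors : Set ℕ), {x | x ∈ S ∧ minimalPeriod f x = d} := by
    ext x
    simp [isPeriodicPt_iff_minimalPeriod_dvd, hn.ne']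
  have hsub : ∀ d ∈ (n.divisors : Set ℕ),
      {x | x ∈ S ∧ minimalPeriod f x = d} ⊆ {x | x ∈ S ∧ IsPeriodicPt f n x} :=
    fun d hd x hx =>
      ⟨hx.1, isPeriodicPt_iff_minimalPeriod_dvd.2 (hx.2 ▸ Nat.dvd_of_mem_divisors hd)⟩
  have hdisj : (n.divisors : Set ℕ).PairwiseDisjoint fun d => {x | x ∈ S ∧ minimalPeriod f x = d} :=
    fun d _ e _ hde => disjoint_left.2 fun x hd he => hde (hd.2.symm.trans he.2)
  rw [hunion, n.divisors.finite_toSet.ncard_biUnion (fun d hd => hfin.subset (hsub d hd)) hdisj,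
    finsum_mem_coe_finset]

lemma ncard_minimalPeriod_eq_sum_moebius {g : ℕ → ℕ}
    (hfin : ∀ m, 0 < m → {x | x ∈ S ∧ IsPeriodicPt f m x}.Finite)
    (hg : ∀ m, 0 < m → {x | x ∈ S ∧ IsPeriodicPt f m x}.ncard = g m) {n : ℕ} (hn : 0 < n) :
    ({x | x ∈ S ∧ minimalPeriod f x = n}.ncard : ℤ) =
      ∑ d ∈ n.divisors, ArithmeticFunction.moebius d * g (n / d) := by
  have hsum := (ArithmeticFunction.sum_eq_iff_sum_smul_moebius_eq
    (f := fun d => ({x | x ∈ S ∧ minimalPeriod f x = d}.ncard : ℤ)) (g := fun m => (g m : ℤ))).1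
    (fun m hm => by
      exact_mod_cast (ncard_isPeriodicPt_eq_sum_ncard_minimalPeriod f S hm (hfin m hm)).symm.trans
        (hg m hm)) n hn
  rw [← hsum, Nat.sum_divisorsAntidiagonal (fun d e => ArithmeticFunction.moebius d • (g e : ℤ))]
  simp only [smul_eq_mul]

end Function

def oddDenSubring : Subring ℚ where
  carrier := {x | Odd x.den}
  mul_mem' {a b} ha hb := (ha.mul hb).of_dvd_nat (Rat.mul_den_dvd a b)
  one_mem' := odd_one
  add_mem' {a b} ha hb := (ha.mul hb).of_dvd_nat (Rat.add_den_dvd a b)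
  zero_mem' := odd_one
  neg_mem' {a} ha := by rwa [Set.mem_ofPred, Rat.den_neg_eq_den]

namespace oddDenSubring

@[simp] lemma mem_iff {x : ℚ} : x ∈ oddDenSubring ↔ Odd x.den := Iff.rfl

lemma intCast_div_mem {k d : ℤ} (hd : Odd d) : (k / d : ℚ) ∈ oddDenSubring := by
  have hdvd : ((k / d : ℚ).den : ℤ) ∣ d := by simpa [Rat.divInt_eq_div] using Rat.den_dvd k d
  exact (Int.natAbs_odd.2 hd).of_dvd_nat (Int.natCast_dvd.1 hdvd)

lemma inv_three_mem : (3⁻¹ : ℚ) ∈ oddDenSubring := by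
  simpa using intCast_div_mem (k := 1) (d := 3) (by decide)

lemma half_not_mem : (1 / 2 : ℚ) ∉ oddDenSubring := by simp

end oddDenSubring

-- the paper's `ℚ[(2)]`
local notation "ℤ₍₂₎" => oddDenSubring

namespace Collatz

open Function

noncomputable def branch (b : Bool) (x : ℚ) : ℚ := if b then (3 * x + 1) / 2 else x / 2

@[simp] lemma branch_true (x : ℚ) : branch true x = (3 * x + 1) / 2 := rfl

@[simp] lemma branch_false (x : ℚ) : branch false x = x / 2 := rfl

def parity (x : ℚ) : Bool := !decide (Even x.num)

lemma T_eq_branch (x : ℚ) : T x = branch (parity x) x := by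
  by_cases h : Even x.num <;> simp [T, branch, parity, h]

lemma T_mem {x : ℚ} (hx : x ∈ ℤ₍₂₎) : T x ∈ ℤ₍₂₎ := by
  have hden : Odd (x.den : ℤ) := (Int.odd_coe_nat _).2 hx
  have hden₀ : ((x.den : ℤ) : ℚ) ≠ 0 := by simp
  have hmul : x * x.den = x.num := Rat.mul_den_eq_num x
  by_cases he : Even x.num
  · obtain ⟨k, hk⟩ := he
    have hkQ : (x.num : ℚ) = k + k := by exact_mod_cast hk
    have : T x = k / (x.den : ℤ) := by
      rw [T, if_pos ⟨k, hk⟩, eq_div_iff hden₀]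
      push_cast
      linear_combination (1 / 2) * hmul + (1 / 2) * hkQ
    exact this ▸ oddDenSubring.intCast_div_mem hden
  · obtain ⟨k, hk⟩ := ((by decide : Odd (3 : ℤ)).mul (Int.not_even_iff_odd.1 he)).add_odd hden
    have hkQ : 3 * (x.num : ℚ) + x.den = k + k := by exact_mod_cast hk
    have : T x = k / (x.den : ℤ) := by
      rw [T, if_neg he, eq_div_iff hden₀]
      push_cast
      linear_combination (3 / 2) * hmul + (1 / 2) * hkQ
    exact this ▸ oddDenSubring.intCast_div_mem hden

lemma branch_true_sub_three_mul_branch_false (x : ℚ) :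
    branch true x - 3 * branch false x = 1 / 2 := by
  simp only [branch_true, branch_false]
  ring

lemma branch_mem_iff {x : ℚ} (hx : x ∈ ℤ₍₂₎) {b : Bool} : branch b x ∈ ℤ₍₂₎ ↔ b = parity x := by
  refine ⟨fun hb => ?_, fun hb => hb ▸ T_eq_branch x ▸ T_mem hx⟩
  by_contra hne
  have hT : branch (parity x) x ∈ ℤ₍₂₎ := T_eq_branch x ▸ T_mem hx
  have hboth : branch true x ∈ ℤ₍₂₎ ∧ branch false x ∈ ℤ₍₂₎ := by
    cases b <;> cases h : parity x <;> simp_all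
  apply oddDenSubring.half_not_mem
  rw [← branch_true_sub_three_mul_branch_false]
  exact sub_mem hboth.1 (mul_mem (intCast_mem _ 3) hboth.2)

lemma branch_not_mem {x : ℚ} (hx : x ∉ ℤ₍₂₎) (b : Bool) : branch b x ∉ ℤ₍₂₎ := by
  intro hb
  apply hx
  cases b
  · have : x = 2 * branch false x := by rw [branch_false]; ring
    exact this ▸ mul_mem (intCast_mem _ 2) hb
  · have : x = (2 * branch true x - 1) * 3⁻¹ := by rw [branch_true]; ring
    exact this ▸ mul_mem (sub_mem (mul_mem (intCast_mem _ 2) hb) (one_mem _))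
      oddDenSubring.inv_three_mem

noncomputable def branchComp : {n : ℕ} → (Fin n → Bool) → ℚ → ℚ
  | 0, _, x => x
  | _ + 1, u, x => branchComp (Fin.tail u) (branch (u 0) x)

noncomputable def itinerary (n : ℕ) (x : ℚ) : Fin n → Bool := fun i => parity (T^[i] x)

lemma itinerary_succ (n : ℕ) (x : ℚ) :
    itinerary (n + 1) x = Fin.cons (parity x) (itinerary n (T x)) := by
  ext i
  refine Fin.cases rfl (fun j => ?_) i
  simp [itinerary, Function.iterate_succ_apply]

lemma branchComp_itinerary (n : ℕ) (x : ℚ) : branchComp (itinerary n x) x = T^[n] x := by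
  induction n generalizing x with
  | zero => rfl
  | succ n ih =>
    rw [branchComp, itinerary_succ, Fin.tail_cons, Fin.cons_zero, ← T_eq_branch, ih,
      Function.iterate_succ_apply]

lemma branchComp_not_mem {n : ℕ} (u : Fin n → Bool) {x : ℚ} (hx : x ∉ ℤ₍₂₎) :
    branchComp u x ∉ ℤ₍₂₎ := by
  induction n generalizing x with
  | zero => exact hx
  | succ n ih => exact ih _ (branch_not_mem hx _)

lemma branchComp_mem_iff {n : ℕ} (u : Fin n → Bool) {x : ℚ} (hx : x ∈ ℤ₍₂₎) :
    branchComp u x ∈ ℤ₍₂₎ ↔ u = itinerary n x := by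
  induction n generalizing x with
  | zero => exact iff_of_true hx (Subsingleton.elim _ _)
  | succ n ih =>
    rw [branchComp, itinerary_succ, ← Fin.cons_self_tail u, Fin.cons_inj, Fin.tail_cons,
      Fin.cons_zero]
    by_cases h0 : u 0 = parity x
    · rw [h0, ← T_eq_branch, ih _ (T_mem hx)]
      simp
    · simpa [h0] using branchComp_not_mem _ ((branch_mem_iff hx).not.2 h0)

lemma exists_two_pow_mul_branchComp {n : ℕ} (u : Fin n → Bool) :
    ∃ (k : ℕ) (m : ℤ), ∀ y, 2 ^ n * branchComp u y = 3 ^ k * y + m := by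
  induction n with
  | zero => exact ⟨0, 0, fun y => by simp [branchComp]⟩
  | succ n ih =>
    obtain ⟨k, m, h⟩ := ih (Fin.tail u)
    cases hu : u 0
    · refine ⟨k, 2 * m, fun y => ?_⟩
      rw [branchComp, hu, pow_succ', mul_assoc, h, branch_false]
      push_cast; ring
    · refine ⟨k + 1, 3 ^ k + 2 * m, fun y => ?_⟩
      rw [branchComp, hu, pow_succ', mul_assoc, h, branch_true]
      push_cast; ring

lemma odd_two_pow_sub {n : ℕ} (hn : n ≠ 0) {a : ℤ} (ha : Odd a) : Odd (2 ^ n - a) :=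
  (Int.even_pow.2 ⟨even_two, hn⟩).sub_odd ha

lemma two_pow_mul_eq_iff {n : ℕ} (hn : n ≠ 0) {a m : ℤ} (ha : Odd a) (y : ℚ) :
    2 ^ n * y = a * y + m ↔ y = m / (2 ^ n - a : ℤ) := by
  have hD : (2 ^ n - a : ℤ) ≠ 0 := fun h => by simpa [h] using odd_two_pow_sub hn ha
  rw [eq_div_iff (Int.cast_ne_zero.2 hD)]
  push_cast
  constructor <;> intro h <;> linarith

lemma exists_mem_forall_branchComp_eq_self_iff {n : ℕ} (hn : n ≠ 0) (u : Fin n → Bool) :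
    ∃ y ∈ ℤ₍₂₎, ∀ z, branchComp u z = z ↔ z = y := by
  obtain ⟨k, m, h⟩ := exists_two_pow_mul_branchComp u
  have h3 : Odd ((3 : ℤ) ^ k) := (by decide : Odd (3 : ℤ)).pow
  refine ⟨m / (2 ^ n - 3 ^ k : ℤ), oddDenSubring.intCast_div_mem (odd_two_pow_sub hn h3),
    fun z => ?_⟩
  rw [← two_pow_mul_eq_iff hn h3, ← mul_right_inj' (pow_ne_zero n (two_ne_zero' ℚ)), h]
  push_cast
  exact eq_comm

lemma bijOn_itinerary {n : ℕ} (hn : n ≠ 0) :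
    Set.BijOn (itinerary n) {x | x ∈ ℤ₍₂₎ ∧ IsPeriodicPt T n x} Set.univ := by
  refine ⟨Set.mapsTo_univ _ _, ?_, ?_⟩
  · rintro x ⟨-, hx⟩ y ⟨-, hy⟩ hxy
    obtain ⟨z, -, hz⟩ := exists_mem_forall_branchComp_eq_self_iff hn (itinerary n x)
    have hfx : branchComp (itinerary n x) x = x := (branchComp_itinerary n x).trans hx
    have hfy : branchComp (itinerary n x) y = y := hxy ▸ (branchComp_itinerary n y).trans hy
    exact ((hz x).1 hfx).trans ((hz y).1 hfy).symm
  · intro u _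
    obtain ⟨y, hy, hz⟩ := exists_mem_forall_branchComp_eq_self_iff hn u
    have hfy : branchComp u y = y := (hz y).2 rfl
    have hu : u = itinerary n y := (branchComp_mem_iff u hy).1 (hfy.symm ▸ hy)
    refine ⟨y, ⟨hy, ?_⟩, hu.symm⟩
    rw [IsPeriodicPt, IsFixedPt, ← branchComp_itinerary, ← hu, hfy]

lemma ncard_mem_isPeriodicPt {n : ℕ} (hn : n ≠ 0) :
    {x | x ∈ ℤ₍₂₎ ∧ IsPeriodicPt T n x}.ncard = 2 ^ n := by
  rw [(bijOn_itinerary hn).ncard_eq, Set.ncard_univ]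
  simp

lemma finite_mem_isPeriodicPt {n : ℕ} (hn : 0 < n) :
    {x | x ∈ ℤ₍₂₎ ∧ IsPeriodicPt T n x}.Finite :=
  Set.finite_of_ncard_ne_zero (by rw [ncard_mem_isPeriodicPt hn.ne']; positivity)

lemma mapsTo_mem_minimalPeriod {n : ℕ} (hn : 0 < n) :
    Set.MapsTo T {x | x ∈ ℤ₍₂₎ ∧ minimalPeriod T x = n} {x | x ∈ ℤ₍₂₎ ∧ minimalPeriod T x = n} :=
  fun _ ⟨hx, hper⟩ => ⟨T_mem hx,
    (minimalPeriod_apply (minimalPeriod_pos_iff_mem_periodicPts.1 (hper ▸ hn))).trans hper⟩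

lemma cyclesOfLength_eq_image_forwardOrbit {n : ℕ} (hn : 0 < n) :
    cyclesOfLength n = forwardOrbit T '' {x | x ∈ ℤ₍₂₎ ∧ minimalPeriod T x = n} := by
  ext c
  constructor
  · rintro ⟨x, hx, hperiodic, hmin, rfl⟩
    exact ⟨x, ⟨hx, (minimalPeriod_eq_iff_of_pos T hn).2 ⟨hperiodic, hmin⟩⟩, rfl⟩
  · rintro ⟨x, ⟨hx, hper⟩, rfl⟩
    exact ⟨x, hx, (minimalPeriod_eq_iff_of_pos T hn).1 hper |>.1,
      (minimalPeriod_eq_iff_of_pos T hn).1 hper |>.2, rfl⟩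

end Collatz

/-- Eq. 2.5 of [Lagarias 1990]: the number `I(n)` of `T`-cycles of exact length `n`
in `ℚ[(2)]` satisfies `I(n) = (1/n) ∑_{d ∣ n} μ(d) 2^{n/d}`. -/
theorem stmt_13 (n : ℕ) (hn : 1 ≤ n) :
    (n : ℤ) * (cyclesOfLength n).ncard =
      ∑ d ∈ n.divisors, ArithmeticFunction.moebius d * 2 ^ (n / d) := by
  open Function Collatz in
  have hE : {x | x ∈ ℤ₍₂₎ ∧ minimalPeriod T x = n}.Finite :=
    (finite_mem_isPeriodicPt hn).subset fun x hx => ⟨hx.1, hx.2 ▸ isPeriodicPt_minimalPeriod T x⟩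
  rw [cyclesOfLength_eq_image_forwardOrbit hn, ← Nat.cast_mul,
    ← ncard_eq_mul_ncard_image_forwardOrbit T hn hE (mapsTo_mem_minimalPeriod hn) fun x hx => hx.2]
  exact_mod_cast ncard_minimalPeriod_eq_sum_moebius T ℤ₍₂₎ (fun _ => finite_mem_isPeriodicPt)
    (fun _ hm => ncard_mem_isPeriodicPt hm.ne') hn
end

section
/- Let λ ≥ 1, 0 ≤ ω ≤ λ, let k and d be positive integers with |2^λ − 3^ω| = d·k, and let v be a 0–1 vector of length λ with ω(v) = ω and gcd(ρ(v), |2^λ − 3^ω|) = d. Then x(v) = ρ(v)/(2^λ − 3^ω) has denominator k in lowest terms, T^λ(x(v)) = x(v), and the number of indices j with 0 ≤ j < λ for which T^j(x(v)) is odd equals ω. In particular, the cycle through x(v) lies in D_k, has length dividing λ, and (when λ is its exact length) has exactly ω odd elements. -/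
namespace S15

def tl (f : ℕ → ℕ) (L j : ℕ) : ℕ := ∑ i ∈ Finset.Ico (j+1) L, f i
def rh (f : ℕ → ℕ) (L : ℕ) : ℕ := ∑ j ∈ Finset.range L, f j * 3 ^ (tl f L j) * 2 ^ j
def fv {L : ℕ} (v : Fin L → ℕ) : ℕ → ℕ := fun i => if h : i < L then v ⟨i, h⟩ else 0
def sig {L : ℕ} (v : Fin L → ℕ) : Fin L → ℕ :=
  fun j => v ⟨((j : ℕ) + 1) % L, Nat.mod_lt _ j.pos⟩

lemma tl_congr {f g : ℕ → ℕ} {L : ℕ} (h : ∀ i < L, f i = g i) (j : ℕ) : tl f L j = tl g L j :=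
  Finset.sum_congr rfl fun i hi => h i (Finset.mem_Ico.mp hi).2

lemma rh_congr {f g : ℕ → ℕ} {L : ℕ} (h : ∀ i < L, f i = g i) : rh f L = rh g L :=
  Finset.sum_congr rfl fun j hj => by
    rw [h j (Finset.mem_range.mp hj), tl_congr h]

lemma rhoF_eq {L : ℕ} (v : Fin L → ℕ) : rhoF v = rh (fv v) L := by
  rw [rhoF, rh]
  rw [← Fin.sum_univ_eq_sum_range (fun j => fv v j * 3 ^ (tl (fv v) L j) * 2 ^ j) L]
  refine Finset.sum_congr rfl fun j _ => ?_
  have h1 : fv v (j : ℕ) = v j := by simp [fv, j.isLt]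
  have h2 : tl (fv v) L (j : ℕ) = ∑ i : Fin L, if (j : ℕ) < (i : ℕ) then v i else 0 := by
    have e1 : tl (fv v) L (j : ℕ) = ∑ i ∈ Finset.range L, if (j : ℕ) < i then fv v i else 0 := by
      rw [tl, ← Finset.sum_filter]
      congr 1
      ext i; simp [Finset.mem_Ico]; omega
    rw [e1, ← Fin.sum_univ_eq_sum_range (fun i => if (j : ℕ) < i then fv v i else 0) L]
    exact Finset.sum_congr rfl fun i _ => by simp [fv, i.isLt]
  rw [h1, h2]

lemma omegaF_eq {L : ℕ} (v : Fin L → ℕ) : omegaF v = ∑ i ∈ Finset.range L, fv v i := by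
  rw [omegaF, ← Fin.sum_univ_eq_sum_range (fun i => fv v i) L]
  exact Finset.sum_congr rfl fun i _ => by simp [fv, i.isLt]

lemma fv_sig {L : ℕ} (v : Fin L → ℕ) (i : ℕ) (hi : i < L) :
    fv (sig v) i = if i = L - 1 then fv v 0 else fv v (i + 1) := by
  simp only [fv, dif_pos hi, sig]
  rcases eq_or_lt_of_le (Nat.succ_le_of_lt hi) with h | h
  · have h1 : i = L - 1 := by omega
    have h2 : (i + 1) % L = 0 := by have h3 : i + 1 = L := h; rw [h3]; exact Nat.mod_self L
    simp only [h1, if_pos rfl, dif_pos (by omega : 0 < L)]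
    congr 1
    exact Fin.ext (by simpa [h1] using h2)
  · have h2 : (i + 1) % L = i + 1 := Nat.mod_eq_of_lt h
    simp only [if_neg (by omega : ¬ i = L - 1), dif_pos h]
    congr 1
    exact Fin.ext (by simpa using h2)

lemma key (f : ℕ → ℕ) (n : ℕ) (h0 : f 0 ≤ 1) :
    (2 : ℤ) * rh (fun i => if i = n then f 0 else f (i+1)) (n+1)
      = 3 ^ (f 0) * rh f (n+1)
        + (f 0 : ℤ) * ((2:ℤ)^(n+1) - 3 ^ (∑ i ∈ Finset.range (n+1), f i)) := by
  set g : ℕ → ℕ := fun i => if i = n then f 0 else f (i+1) with hg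
  have tg_top : tl g (n+1) n = 0 := by simp [tl]
  have tg : ∀ j < n, tl g (n+1) j = tl f (n+1) (j+1) + f 0 := by
    intro j hj
    rw [tl, Finset.sum_Ico_succ_top (by omega)]
    have e : ∀ i ∈ Finset.Ico (j+1) n, g i = f (i+1) := fun i hi =>
      if_neg (by have := (Finset.mem_Ico.mp hi).2; omega)
    rw [Finset.sum_congr rfl e, Finset.sum_Ico_add' f (j+1) n 1]
    have hgn : g n = f 0 := if_pos rfl
    rw [hgn, tl]
  have hrg : rh g (n+1) = 3 ^ (f 0) * (∑ j ∈ Finset.range n, f (j+1) * 3 ^ (tl f (n+1) (j+1)) * 2 ^ j) + f 0 * 2 ^ n := by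
    rw [rh, Finset.sum_range_succ, tg_top]
    have e : ∀ j ∈ Finset.range n, g j * 3 ^ tl g (n+1) j * 2 ^ j
        = 3 ^ (f 0) * (f (j+1) * 3 ^ (tl f (n+1) (j+1)) * 2 ^ j) := by
      intro j hj
      have hj' := Finset.mem_range.mp hj
      rw [tg j hj']
      have hgj : g j = f (j+1) := if_neg (by omega)
      rw [hgj, pow_add]; ring
    rw [Finset.sum_congr rfl e, ← Finset.mul_sum]
    have hgn : g n = f 0 := if_pos rfl
    rw [hgn]; ring
  have hrf : rh f (n+1) = 2 * (∑ j ∈ Finset.range n, f (j+1) * 3 ^ (tl f (n+1) (j+1)) * 2 ^ j) + f 0 * 3 ^ (tl f (n+1) 0) := by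
    rw [rh, Finset.sum_range_succ']
    have e : ∀ j ∈ Finset.range n, f (j+1) * 3 ^ tl f (n+1) (j+1) * 2 ^ (j+1)
        = 2 * (f (j+1) * 3 ^ (tl f (n+1) (j+1)) * 2 ^ j) := by intro j hj; ring
    rw [Finset.sum_congr rfl e, ← Finset.mul_sum]
    ring
  have hW : ∑ i ∈ Finset.range (n+1), f i = f 0 + tl f (n+1) 0 := by
    rw [Finset.range_eq_Ico, Finset.sum_eq_sum_Ico_succ_bot (by omega)]; rfl
  rw [hrg, hrf, hW]
  rcases Nat.le_one_iff_eq_zero_or_eq_one.mp h0 with h | h <;> rw [h] <;> push_cast [pow_add] <;> ring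

lemma rh_split (f : ℕ → ℕ) (n : ℕ) :
    rh f (n+1) = 2 * (∑ j ∈ Finset.range n, f (j+1) * 3 ^ (tl f (n+1) (j+1)) * 2 ^ j)
      + f 0 * 3 ^ (tl f (n+1) 0) := by
  rw [rh, Finset.sum_range_succ']
  have e : ∀ j ∈ Finset.range n, f (j+1) * 3 ^ tl f (n+1) (j+1) * 2 ^ (j+1)
      = 2 * (f (j+1) * 3 ^ (tl f (n+1) (j+1)) * 2 ^ j) := by intro j hj; ring
  rw [Finset.sum_congr rfl e, ← Finset.mul_sum]
  ring

lemma rhoF_parity {L : ℕ} (v : Fin L → ℕ) (hL : 0 < L) :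
    Odd (rhoF v) ↔ Odd (v ⟨0, hL⟩) := by
  obtain ⟨n, rfl⟩ : ∃ n, L = n + 1 := ⟨L - 1, by omega⟩
  rw [rhoF_eq, rh_split]
  have h0 : fv v 0 = v ⟨0, hL⟩ := by simp [fv]
  have hA : 3 ^ tl (fv v) (n+1) 0 % 2 = 1 := Nat.odd_iff.mp (Odd.pow ⟨1, rfl⟩)
  have hmul : fv v 0 * 3 ^ tl (fv v) (n+1) 0 % 2 = fv v 0 % 2 := by
    rw [Nat.mul_mod, hA, mul_one]; omega
  rw [Nat.odd_iff, Nat.odd_iff]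
  omega

lemma omegaF_sig {L : ℕ} (v : Fin L → ℕ) (hL : 0 < L) : omegaF (sig v) = omegaF v := by
  obtain ⟨n, rfl⟩ : ∃ n, L = n + 1 := ⟨L - 1, by omega⟩
  rw [omegaF_eq, omegaF_eq]
  rw [Finset.sum_congr rfl (fun i hi => fv_sig v i (Finset.mem_range.mp hi))]
  rw [Finset.sum_range_succ, Finset.sum_range_succ' (fun i => fv v i) n]
  simp only [Nat.add_sub_cancel, if_pos rfl]
  congr 1
  exact Finset.sum_congr rfl fun j hj => by
    rw [if_neg (by have := Finset.mem_range.mp hj; omega)]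

lemma rho_sig {L : ℕ} (w : Fin L → ℕ) (hL : 0 < L) (h01 : ∀ j, w j ≤ 1) :
    (2 : ℤ) * rhoF (sig w)
      = 3 ^ (w ⟨0, hL⟩) * rhoF w + (w ⟨0, hL⟩ : ℤ) * ((2:ℤ)^L - 3 ^ (omegaF w)) := by
  obtain ⟨n, rfl⟩ : ∃ n, L = n + 1 := ⟨L - 1, by omega⟩
  rw [rhoF_eq, rhoF_eq, omegaF_eq]
  rw [rh_congr (f := fv (sig w)) (g := fun i => if i = n then fv w 0 else fv w (i+1))
    (fun i hi => by rw [fv_sig w i hi]; simp)]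
  have h0 : fv w 0 ≤ 1 := by simpa [fv] using h01 ⟨0, hL⟩
  have hk := key (fv w) n h0
  have h0' : fv w 0 = w ⟨0, hL⟩ := by simp [fv]
  rw [← h0']
  exact hk


lemma num_parity (r : ℕ) (D : ℤ) (hD : D ≠ 0) (hDodd : Odd D) :
    (Odd ((r : ℚ)/(D : ℚ)).num ↔ Odd r) := by
  set q : ℚ := (r : ℚ) / (D : ℚ) with hq
  have hden : ((q.den : ℤ)) ∣ D := by
    have h1 : (Rat.divInt (r : ℤ) D) = q := by rw [Rat.divInt_eq_div, hq]; norm_num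
    rw [← h1]; exact Rat.den_dvd _ _
  have hdenodd : Odd (q.den : ℤ) := by
    rw [← Int.not_even_iff_odd]
    intro he
    obtain ⟨t, ht⟩ := he
    obtain ⟨c, hc⟩ := hden
    exact (Int.not_even_iff_odd.mpr hDodd) ⟨t * c, by rw [hc, ht]; ring⟩
  have hkey : q.num * D = (r : ℤ) * (q.den : ℤ) := by
    have hD' : (D : ℚ) ≠ 0 := Int.cast_ne_zero.mpr hD
    have hden' : ((q.den : ℚ)) ≠ 0 := by exact_mod_cast q.den_ne_zero
    have h2 : (q.num : ℚ) * (D : ℚ) = (r : ℚ) * (q.den : ℚ) := by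
      rw [← Rat.num_div_den q] at hq
      field_simp at hq ⊢
      linear_combination hq
    exact_mod_cast h2
  have h1 : Odd (q.num * D) ↔ Odd ((r : ℤ) * (q.den : ℤ)) := by rw [hkey]
  rw [Int.odd_mul, Int.odd_mul] at h1
  constructor
  · intro h; exact_mod_cast (h1.mp ⟨h, hDodd⟩).1
  · intro h; exact (h1.mpr ⟨by exact_mod_cast h, hdenodd⟩).1

lemma den_eq (r : ℕ) (D : ℤ) (d k : ℕ) (hk : 0 < k) (hd : 0 < d)
    (hdk : D.natAbs = d * k) (hgcd : Nat.gcd r D.natAbs = d) :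
    ((r : ℚ) / (D : ℚ)).den = k := by
  have hD : D ≠ 0 := by
    intro h; rw [h] at hdk; simp at hdk; omega
  obtain ⟨a, ha⟩ : d ∣ r := hgcd ▸ Nat.gcd_dvd_left _ _
  have hcop : Nat.Coprime a k := by
    have h2 : Nat.gcd (d * a) (d * k) = d := by rw [← ha, ← hdk]; exact hgcd
    rw [Nat.gcd_mul_left] at h2
    exact Nat.eq_of_mul_eq_mul_left hd (by rw [h2, mul_one])
  have hk' : (0 : ℤ) < (k : ℤ) := by exact_mod_cast hk
  have hd0 : (d : ℚ) ≠ 0 := Nat.cast_ne_zero.mpr hd.ne'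
  rcases Int.natAbs_eq D with hE | hE
  · have h3 : (r : ℚ) / (D : ℚ) = ((a : ℤ) : ℚ) / ((k : ℤ) : ℚ) := by
      rw [hE, hdk, ha]
      push_cast
      rw [mul_div_mul_left _ _ hd0]
    rw [h3]
    have h4 := Rat.den_div_eq_of_coprime (a := (a : ℤ)) hk' (by simpa using hcop)
    exact_mod_cast h4
  · have h3 : (r : ℚ) / (D : ℚ) = ((-(a : ℤ)) : ℚ) / ((k : ℤ) : ℚ) := by
      rw [hE, hdk, ha]
      push_cast
      rw [div_neg, neg_div, mul_div_mul_left _ _ hd0]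
    rw [h3]
    have h4 := Rat.den_div_eq_of_coprime (a := -(a : ℤ)) hk' (by simpa using hcop)
    exact_mod_cast h4

lemma D_odd (L W : ℕ) (hL : 0 < L) : Odd ((2:ℤ)^L - 3^W) := by
  have h2 : Even ((2:ℤ)^L) := (Int.even_pow).mpr ⟨by decide, hL.ne'⟩
  have h3 : Odd ((3:ℤ)^W) := Odd.pow ⟨1, by norm_num⟩
  rw [Int.odd_sub]
  exact iff_of_false (Int.not_odd_iff_even.mpr h2) (Int.not_even_iff_odd.mpr h3)

lemma T_step {L : ℕ} (w : Fin L → ℕ) (hL : 0 < L) (h01 : ∀ j, w j ≤ 1)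
    (hD : ((2:ℤ)^L - 3^(omegaF w)) ≠ 0) :
    T (xF w) = xF (sig w) := by
  set D : ℤ := (2:ℤ)^L - 3^(omegaF w) with hDdef
  have hDodd : Odd D := D_odd L (omegaF w) hL
  have hDc : ((D : ℤ) : ℚ) = (2:ℚ)^L - 3^(omegaF w) := by rw [hDdef]; push_cast; ring
  have hx : xF w = ((rhoF w : ℕ) : ℚ) / ((D : ℤ) : ℚ) := by rw [xF, hDc]
  have hx2 : xF (sig w) = ((rhoF (sig w) : ℕ) : ℚ) / ((D : ℤ) : ℚ) := by
    rw [xF, omegaF_sig w hL, hDc]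
  have hkey := rho_sig w hL h01
  rw [← hDdef] at hkey
  have hkeyQ : (2:ℚ) * (rhoF (sig w) : ℚ)
      = 3 ^ (w ⟨0, hL⟩) * (rhoF w : ℚ) + (w ⟨0, hL⟩ : ℚ) * ((D : ℤ) : ℚ) := by
    exact_mod_cast congrArg (fun z : ℤ => (z : ℚ)) hkey
  have hnum : Odd ((xF w).num) ↔ Odd (w ⟨0, hL⟩) := by
    rw [hx]; exact (num_parity _ _ hD hDodd).trans (rhoF_parity w hL)
  have hD0 : ((D : ℤ) : ℚ) ≠ 0 := Int.cast_ne_zero.mpr hD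
  rcases Nat.le_one_iff_eq_zero_or_eq_one.mp (h01 ⟨0, hL⟩) with h | h
  · have he : Even (xF w).num := by
      rw [← Int.not_odd_iff_even]
      intro ho
      have := hnum.mp ho
      rw [h] at this
      simp at this
    rw [T, if_pos he, hx2, hx]
    rw [h] at hkeyQ
    push_cast at hkeyQ
    rw [div_div, div_eq_div_iff (mul_ne_zero hD0 two_ne_zero) hD0]
    linear_combination (-(D : ℚ)) * hkeyQ
  · have ho : Odd (xF w).num := hnum.mpr (by rw [h]; exact ⟨0, rfl⟩)
    rw [T, if_neg (by rw [Int.not_even_iff_odd]; exact ho), hx2, hx]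
    rw [h] at hkeyQ
    push_cast at hkeyQ
    rw [div_eq_div_iff two_ne_zero hD0, add_mul, one_mul, mul_assoc, div_mul_cancel₀ _ hD0]
    linear_combination -hkeyQ

lemma iter_all {L : ℕ} (v : Fin L → ℕ) (hL : 0 < L) (h01 : ∀ j, v j ≤ 1)
    (hD : ((2:ℤ)^L - 3^(omegaF v)) ≠ 0) (m : ℕ) :
    T^[m] (xF v) = xF (sig^[m] v) ∧ omegaF (sig^[m] v) = omegaF v ∧ (∀ j, (sig^[m] v) j ≤ 1)
      ∧ ∀ i : Fin L, (sig^[m] v) i = v ⟨((i : ℕ) + m) % L, Nat.mod_lt _ hL⟩ := by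
  induction m with
  | zero =>
    refine ⟨rfl, rfl, h01, fun i => ?_⟩
    have he : (⟨((i : ℕ) + 0) % L, Nat.mod_lt _ hL⟩ : Fin L) = i :=
      Fin.ext (by rw [Nat.add_zero]; exact Nat.mod_eq_of_lt i.isLt)
    show v i = v ⟨((i : ℕ) + 0) % L, Nat.mod_lt _ hL⟩
    rw [he]
  | succ m ih =>
    obtain ⟨ih1, ih2, ih3, ih4⟩ := ih
    have hstep := T_step (sig^[m] v) hL ih3 (by rw [ih2]; exact hD)
    refine ⟨?_, ?_, ?_, ?_⟩
    · rw [Function.iterate_succ_apply', ih1, Function.iterate_succ_apply' sig, hstep]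
    · rw [Function.iterate_succ_apply' sig, omegaF_sig _ hL, ih2]
    · intro j
      rw [Function.iterate_succ_apply' sig]
      exact ih3 _
    · intro i
      rw [Function.iterate_succ_apply' sig]
      show (sig^[m] v) ⟨((i : ℕ) + 1) % L, _⟩ = _
      rw [ih4]
      congr 1
      apply Fin.ext
      show (((i : ℕ) + 1) % L + m) % L = ((i : ℕ) + (m + 1)) % L
      rw [Nat.mod_add_mod]
      congr 1
      omega

end S15

/-- If `|2^λ - 3^ω| = d·k` and `v` is a `0-1` vector of length `λ` with `ω(v) = ω`
and `gcd(ρ(v), |2^λ - 3^ω|) = d`, then `x(v)` has denominator `k` in lowest terms,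
`T^λ(x(v)) = x(v)`, and exactly `ω` of the iterates `T^j(x(v))`, `0 ≤ j < λ`,
are odd. -/
theorem stmt_15 (L W k d : ℕ) (hL : 1 ≤ L) (hW : W ≤ L) (hk : 0 < k) (hd : 0 < d)
    (hdk : ((2 : ℤ) ^ L - (3 : ℤ) ^ W).natAbs = d * k)
    (v : Fin L → ℕ) (hv01 : ∀ j, v j = 0 ∨ v j = 1) (hW' : omegaF v = W)
    (hgcd : Nat.gcd (rhoF v) ((2 : ℤ) ^ L - (3 : ℤ) ^ W).natAbs = d) :
    (xF v).den = k ∧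
    T^[L] (xF v) = xF v ∧
    (Finset.univ.filter fun j : Fin L => Odd ((T^[(j : ℕ)] (xF v)).num)).card = W := by
  have hL0 : 0 < L := hL
  subst hW'
  have h01 : ∀ j, v j ≤ 1 := fun j => by rcases hv01 j with h | h <;> omega
  set D : ℤ := (2:ℤ)^L - 3^(omegaF v) with hDdef
  have hDne : D ≠ 0 := by
    intro h
    rw [h] at hdk
    simp only [Int.natAbs_zero] at hdk
    have := Nat.mul_pos hd hk
    omega
  have hDodd := S15.D_odd L (omegaF v) hL0
  have hDc : ((D : ℤ) : ℚ) = (2:ℚ)^L - 3^(omegaF v) := by rw [hDdef]; push_cast; ring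
  have hx : xF v = ((rhoF v : ℕ) : ℚ) / ((D : ℤ) : ℚ) := by rw [xF, hDc]
  refine ⟨?_, ?_, ?_⟩
  · rw [hx]
    exact S15.den_eq (rhoF v) D d k hk hd hdk hgcd
  · obtain ⟨h1, h2, h3, h4⟩ := S15.iter_all v hL0 h01 hDne L
    rw [h1]
    congr 1
    funext i
    rw [h4 i]
    congr 1
    refine Fin.ext ?_
    show ((i : ℕ) + L) % L = (i : ℕ)
    rw [Nat.add_mod_right]
    exact Nat.mod_eq_of_lt i.isLt
  · rw [Finset.card_filter]
    have hterm : ∀ j : Fin L, (if Odd ((T^[(j : ℕ)] (xF v)).num) then 1 else 0) = v j := by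
      intro j
      obtain ⟨h1, h2, h3, h4⟩ := S15.iter_all v hL0 h01 hDne (j : ℕ)
      have hxj : T^[(j : ℕ)] (xF v)
          = ((rhoF (S15.sig^[(j : ℕ)] v) : ℕ) : ℚ) / ((D : ℤ) : ℚ) := by
        rw [h1, xF, h2, hDc]
      have hodd : Odd ((T^[(j : ℕ)] (xF v)).num) ↔ Odd ((S15.sig^[(j : ℕ)] v) ⟨0, hL0⟩) := by
        rw [hxj]
        exact (S15.num_parity _ _ hDne hDodd).trans (S15.rhoF_parity _ hL0)
      have hval : (S15.sig^[(j : ℕ)] v) ⟨0, hL0⟩ = v j := by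
        rw [h4 ⟨0, hL0⟩]
        congr 1
        refine Fin.ext ?_
        show ((0 : ℕ) + (j : ℕ)) % L = (j : ℕ)
        rw [Nat.zero_add]
        exact Nat.mod_eq_of_lt j.isLt
      rw [hval] at hodd
      rcases hv01 j with h | h
      · rw [if_neg, h]
        intro ho
        have := hodd.mp ho
        rw [h] at this
        simp at this
      · rw [if_pos (hodd.mpr (by rw [h]; exact ⟨0, rfl⟩)), h]
    rw [Finset.sum_congr rfl (fun j _ => hterm j)]
    rfl
end
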